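/- For the ACDC model with V(t) = ∫_{t^s}^{t^e} e^{sR} Σ Σᵀ e^{sRᵀ} ds where R is eigendecomposable R = PΛP⁻¹ with eigenvalues ρ_i, V(t) = P ( N ⊙ (P⁻¹ ΣΣᵀ P⁻ᵀ) ) Pᵀ where N_{ij} = (e^{(ρ_i+ρ_j)t^e} - e^{(ρ_i+ρ_j)t^s})/(ρ_i+ρ_j) when ρ_i+ρ_j ≠ 0 and N_{ij} = t^e - t^s otherwise. -/

import Mathlib

open Matrix MeasureTheory

/-! Conjugating by `P` turns `e^{sR}` into the diagonal matrix `diag(e^{ρ s})`, and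
`diag(d) M diag(d) = (dᵢ dⱼ) ⊙ M`, so the integrand is `P ((e^{(ρᵢ+ρⱼ)s}) ⊙ M) Pᵀ` with
`M = P⁻¹ΣΣᵀP⁻ᵀ` independent of `s`. Each entry is a linear combination of the scalar functions
`e^{(ρᵢ+ρⱼ)s}`, whose integrals over `[tₛ, tₑ]` are the entries of `N`. -/

namespace Matrix

variable {l m n o α : Type*} [Fintype m] [Fintype n]

theorem diagonal_mul_mul_diagonal_eq_hadamard [DecidableEq m] [DecidableEq n] [CommSemiring α]
    (d : m → α) (e : n → α) (M : Matrix m n α) :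
    diagonal d * M * diagonal e = (of fun a b => d a * e b) ⊙ M := by
  ext a b
  simp only [mul_diagonal, diagonal_mul, hadamard_apply, of_apply]
  ring

theorem mul_hadamard_mul_apply [CommSemiring α] (P : Matrix l m α) (X M : Matrix m n α)
    (Q : Matrix n o α) (i : l) (j : o) :
    (P * (X ⊙ M) * Q) i j = ∑ a, ∑ b, P i a * M a b * Q b j * X a b := by
  simp only [mul_apply, hadamard_apply, Finset.sum_mul]
  rw [Finset.sum_comm]
  refine Finset.sum_congr rfl fun a _ => Finset.sum_congr rfl fun b _ => ?_
  ring

theorem intervalIntegral_mul_hadamard_mul_apply (P : Matrix l m ℂ) (X : ℝ → Matrix m n ℂ)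
    (M : Matrix m n ℂ) (Q : Matrix n o ℂ) {t₀ t₁ : ℝ}
    (hX : ∀ a b, IntervalIntegrable (fun s => X s a b) volume t₀ t₁) (i : l) (j : o) :
    ∫ s in t₀..t₁, (P * (X s ⊙ M) * Q) i j
      = (P * ((of fun a b => ∫ s in t₀..t₁, X s a b) ⊙ M) * Q) i j := by
  simp only [mul_hadamard_mul_apply, of_apply, ← Fintype.sum_prod_type']
  rw [intervalIntegral.integral_finsetSum fun p _ => (hX p.1 p.2).const_mul _]
  exact Finset.sum_congr rfl fun p _ => intervalIntegral.integral_const_mul _ _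

theorem exp_smul_conj_diagonal [DecidableEq m] (P : Matrix m m ℂ) (hP : IsUnit P)
    (ρ : m → ℂ) (s : ℂ) :
    NormedSpace.exp (s • (P * diagonal ρ * P⁻¹))
      = P * diagonal (fun a => Complex.exp (ρ a * s)) * P⁻¹ := by
  rw [← Matrix.smul_mul, ← Matrix.mul_smul, ← diagonal_smul, exp_conj P _ hP, exp_diagonal]
  congr 3
  funext a
  simp only [Pi.exp_def, ← Complex.exp_eq_exp_ℂ, Pi.smul_apply, smul_eq_mul, mul_comm]

theorem exp_smul_conj_diagonal_mul_mul_transpose [DecidableEq m] (P : Matrix m m ℂ)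
    (hP : IsUnit P) (ρ : m → ℂ) (A : Matrix m m ℂ) (s : ℂ) :
    NormedSpace.exp (s • (P * diagonal ρ * P⁻¹)) * A *
        NormedSpace.exp (s • (P * diagonal ρ * P⁻¹)ᵀ)
      = P * ((of fun a b => Complex.exp ((ρ a + ρ b) * s)) ⊙ (P⁻¹ * A * P⁻¹ᵀ)) * Pᵀ := by
  rw [← transpose_smul, exp_transpose, exp_smul_conj_diagonal P hP, transpose_mul,
    transpose_mul, diagonal_transpose]
  simp only [add_mul, Complex.exp_add, ← diagonal_mul_mul_diagonal_eq_hadamard, Matrix.mul_assoc]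

end Matrix

theorem integral_exp_mul_complex_eq_ite {c : ℂ} {a b : ℝ} :
    ∫ s in a..b, Complex.exp (c * s)
      = if c = 0 then ((b - a : ℝ) : ℂ) else (Complex.exp (c * b) - Complex.exp (c * a)) / c := by
  split_ifs with hc
  · simp [hc]
  · exact integral_exp_mul_complex hc

theorem acdc_covariance_closed_form_general {k : ℕ}
    (R P Sg : Matrix (Fin k) (Fin k) ℂ) (ρ : Fin k → ℂ)
    (hP : IsUnit P.det)
    (hR : R = P * Matrix.diagonal ρ * P⁻¹)
    (ts te : ℝ)
    (N : Matrix (Fin k) (Fin k) ℂ)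
    (hN : ∀ i j, N i j =
      if ρ i + ρ j = 0 then ((te - ts : ℝ) : ℂ)
      else (Complex.exp ((ρ i + ρ j) * te) - Complex.exp ((ρ i + ρ j) * ts)) /
        (ρ i + ρ j)) :
    ∀ i j,
      (∫ s in ts..te,
        (NormedSpace.exp ((s : ℂ) • R) * (Sg * Sgᵀ) *
          NormedSpace.exp ((s : ℂ) • Rᵀ)) i j)
      = (P * (Matrix.hadamard N (P⁻¹ * (Sg * Sgᵀ) * (P⁻¹)ᵀ)) * Pᵀ) i j := by
  intro i j
  subst hR
  have hN_eq : (of fun a b => ∫ s in ts..te, Complex.exp ((ρ a + ρ b) * s)) = N := by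
    ext a b
    rw [of_apply, integral_exp_mul_complex_eq_ite, hN]
  simp only [exp_smul_conj_diagonal_mul_mul_transpose P ((isUnit_iff_isUnit_det P).mpr hP)]
  rw [intervalIntegral_mul_hadamard_mul_apply _ _ _ _
    (fun a b => (by fun_prop : Continuous _).intervalIntegrable _ _)]
  simp only [of_apply, hN_eq]

/-- Closed form for the ACDC branch covariance
`V = ∫_{tₛ}^{tₑ} e^{sR} ΣΣᵀ e^{sRᵀ} ds = P (N ⊙ (P⁻¹ ΣΣᵀ P⁻ᵀ)) Pᵀ` for an
eigendecomposable `R = P Λ P⁻¹` with eigenvalues `ρ`, where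
`N i j = (e^{(ρᵢ+ρⱼ)tₑ} - e^{(ρᵢ+ρⱼ)tₛ})/(ρᵢ+ρⱼ)` when `ρᵢ+ρⱼ ≠ 0` and
`N i j = tₑ - tₛ` otherwise. -/
theorem acdc_covariance_closed_form {k : ℕ}
    (R P Sg : Matrix (Fin k) (Fin k) ℂ) (ρ : Fin k → ℂ)
    (hP : IsUnit P.det)
    (hR : R = P * Matrix.diagonal ρ * P⁻¹)
    (ts te : ℝ) (hts : 0 ≤ ts) (hte : ts < te)
    (N : Matrix (Fin k) (Fin k) ℂ)
    (hN : ∀ i j, N i j =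
      if ρ i + ρ j = 0 then ((te - ts : ℝ) : ℂ)
      else (Complex.exp ((ρ i + ρ j) * te) - Complex.exp ((ρ i + ρ j) * ts)) /
        (ρ i + ρ j)) :
    ∀ i j,
      (∫ s in ts..te,
        (NormedSpace.exp ((s : ℂ) • R) * (Sg * Sgᵀ) *
          NormedSpace.exp ((s : ℂ) • Rᵀ)) i j)
      = (P * (Matrix.hadamard N (P⁻¹ * (Sg * Sgᵀ) * (P⁻¹)ᵀ)) * Pᵀ) i j :=
  acdc_covariance_closed_form_general R P Sg ρ hP hR ts te N hN
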